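/- When applied to the differences of a monotone increasing discrete sequence, the MC-limited piecewise-linear reconstruction does not create new extrema: if u_{i-1} ≤ u_i ≤ u_{i+1}, then with slope s_i = MC(u_{i+1}-u_i, u_i-u_{i-1}, c) and c ≤ 2, the reconstructed left and right face values u_i - s_i/2 and u_i + s_i/2 satisfy u_{i-1} ≤ u_i - s_i/2 ≤ u_i + s_i/2 ≤ u_{i+1}. -/
import Mathlib


noncomputable def MC (a b c : ℝ) : ℝ :=
  min (min (|a + b| / 2) (c * |a|)) (c * |b|) * (Real.sign a / 2 + Real.sign b / 2)

theorem mc_no_new_extrema (u0 u1 u2 c : ℝ) (h01 : u0 ≤ u1) (h12 : u1 ≤ u2)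
    (hc1 : 1 ≤ c) (hc2 : c ≤ 2) (s : ℝ) (hs : s = MC (u2 - u1) (u1 - u0) c) :
    u0 ≤ u1 - s / 2 ∧ u1 - s / 2 ≤ u1 + s / 2 ∧ u1 + s / 2 ≤ u2 := by
  subst hs
  unfold MC
  set a := u2 - u1 with ha'
  set b := u1 - u0 with hb'
  have ha : 0 ≤ a := by simp [ha']; linarith
  have hb : 0 ≤ b := by simp [hb']; linarith
  have hsign : ∀ x : ℝ, 0 ≤ x → 0 ≤ Real.sign x ∧ Real.sign x ≤ 1 := by
    intro x hx
    rcases hx.lt_or_eq with h | h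
    · rw [Real.sign_of_pos h]; norm_num
    · rw [← h, Real.sign_zero]; norm_num
  obtain ⟨hsa0, hsa1⟩ := hsign a ha
  obtain ⟨hsb0, hsb1⟩ := hsign b hb
  rw [abs_of_nonneg (by linarith : (0:ℝ) ≤ a + b), abs_of_nonneg ha, abs_of_nonneg hb]
  set m := min (min ((a + b) / 2) (c * a)) (c * b) with hm'
  have hm0 : 0 ≤ m := le_min (le_min (by positivity) (by positivity)) (by positivity)
  have hma : m ≤ c * a := le_trans (min_le_left _ _) (min_le_right _ _)
  have hmb : m ≤ c * b := min_le_right _ _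
  set f := Real.sign a / 2 + Real.sign b / 2 with hf'
  have hf0 : 0 ≤ f := by positivity
  have hf1 : f ≤ 1 := by simp only [hf']; linarith
  have h1 : 0 ≤ m * f := mul_nonneg hm0 hf0
  have h2 : m * f ≤ m := by nlinarith
  refine ⟨by nlinarith, by nlinarith [h1], by nlinarith⟩
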